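/- arXiv:1103.2440 — 6 statements merged into one kernel-verified Lean document; each statement's English description precedes it below -/
import Mathlib

section
/- Let S and V be real inner product spaces, let d : S → V and J : S → S be linear maps with ⟪J w, w⟫ = 0 for every w ∈ S, and let f, c ∈ ℝ. Suppose u : ℝ → S and η : ℝ → V are differentiable and satisfy, for every t ∈ ℝ: ⟪u'(t), w⟫ + f ⟪J u(t), w⟫ − c² ⟪η(t), d w⟫ = 0 for all w ∈ S, and ⟪η'(t), α⟫ + ⟪d u(t), α⟫ = 0 for all α ∈ V. Then the energy H(t) = ½(‖u(t)‖² + c² ‖η(t)‖²) is constant in t. -/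
open RealInnerProductSpace

/-!
Differentiating the energy gives `⟪u, u'⟫ + c² ⟪η, η'⟫`. Testing the momentum equation with
`w = u` kills the Coriolis term (`⟪J u, u⟫ = 0`) and leaves `⟪u', u⟫ = c² ⟪η, d u⟫`; testing the
continuity equation with `α = η` gives `⟪η', η⟫ = -⟪d u, η⟫`. The two pressure terms cancel, so
the energy has zero derivative everywhere and is therefore constant.
-/

section

variable {S V : Type*} [NormedAddCommGroup S] [InnerProductSpace ℝ S]
  [NormedAddCommGroup V] [InnerProductSpace ℝ V]

noncomputable def shallowWaterEnergy (c : ℝ) (u : S) (η : V) : ℝ :=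
  (1 / 2 : ℝ) * (‖u‖ ^ 2 + c ^ 2 * ‖η‖ ^ 2)

theorem hasDerivAt_shallowWaterEnergy (c : ℝ) {u : ℝ → S} {η : ℝ → V} {u' : S} {η' : V}
    {t : ℝ} (hu : HasDerivAt u u' t) (hη : HasDerivAt η η' t) :
    HasDerivAt (fun t => shallowWaterEnergy c (u t) (η t))
      (⟪u t, u'⟫ + c ^ 2 * ⟪η t, η'⟫) t :=
  ((hu.norm_sq.add (hη.norm_sq.const_mul (c ^ 2))).const_mul (1 / 2 : ℝ)).congr_deriv
    (by ring)

theorem shallowWaterEnergy_rate_eq_zero (d : S →ₗ[ℝ] V) (J : S →ₗ[ℝ] S)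
    (f c : ℝ) {u u' : S} {η η' : V} (hJ : ⟪J u, u⟫ = 0)
    (hmom : ⟪u', u⟫ + f * ⟪J u, u⟫ - c ^ 2 * ⟪η, d u⟫ = 0)
    (hcont : ⟪η', η⟫ + ⟪d u, η⟫ = 0) :
    ⟪u, u'⟫ + c ^ 2 * ⟪η, η'⟫ = 0 := by
  linear_combination hmom + c ^ 2 * hcont - f * hJ + real_inner_comm u' u
    + c ^ 2 * real_inner_comm η' η - c ^ 2 * real_inner_comm η (d u)

end

/-- **Energy conservation for the semidiscrete mixed formulation of the
linear rotating shallow-water equations.**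
If `d : S → V` is the discrete divergence, `J : S → S` is a skew operation
(`⟪J w, w⟫ = 0`), and differentiable `u : ℝ → S`, `η : ℝ → V` satisfy the
semidiscrete momentum and continuity equations for all test functions,
then the energy `H(t) = ½(‖u(t)‖² + c²‖η(t)‖²)` is constant in time. -/
theorem energy_conservation
    {S V : Type*} [NormedAddCommGroup S] [InnerProductSpace ℝ S]
    [NormedAddCommGroup V] [InnerProductSpace ℝ V]
    (d : S →ₗ[ℝ] V) (J : S →ₗ[ℝ] S)
    (hJ : ∀ w : S, ⟪J w, w⟫ = 0)
    (f c : ℝ)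
    (u : ℝ → S) (η : ℝ → V) (u' : ℝ → S) (η' : ℝ → V)
    (hu : ∀ t : ℝ, HasDerivAt u (u' t) t)
    (hη : ∀ t : ℝ, HasDerivAt η (η' t) t)
    (hmom : ∀ t : ℝ, ∀ w : S,
      ⟪u' t, w⟫ + f * ⟪J (u t), w⟫ - c ^ 2 * ⟪η t, d w⟫ = 0)
    (hcont : ∀ t : ℝ, ∀ α : V,
      ⟪η' t, α⟫ + ⟪d (u t), α⟫ = 0) :
    ∀ t₁ t₂ : ℝ,
      (1 / 2 : ℝ) * (‖u t₁‖ ^ 2 + c ^ 2 * ‖η t₁‖ ^ 2) =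
      (1 / 2 : ℝ) * (‖u t₂‖ ^ 2 + c ^ 2 * ‖η t₂‖ ^ 2) := by
  have hE : ∀ t, HasDerivAt (fun t => shallowWaterEnergy c (u t) (η t)) 0 t := fun t => by
    simpa only [shallowWaterEnergy_rate_eq_zero d J f c (hJ (u t))
      (hmom t (u t)) (hcont t (η t))] using hasDerivAt_shallowWaterEnergy c (hu t) (hη t)
  exact is_const_of_deriv_eq_zero (fun t => (hE t).differentiableAt) (fun t => (hE t).deriv)
end

section
/- If p : ℝ² → ℝ is a polynomial function of total degree at most 3 that vanishes at every point of each of the three edges e₁, e₂, e₃ of the triangle K and satisfies p((v₁ + v₂ + v₃)/3) = 1, then p = 27 λ₁ λ₂ λ₃ identically on ℝ². In particular, the cubic bubble function B = 27 λ₁ λ₂ λ₃ is the unique cubic polynomial taking the value 1 at the barycentre of K and vanishing on all three edges of K. -/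
/-!
Put `F = p - 27 λ₁ λ₂ λ₃`. Along any line `F` is a univariate polynomial of degree at most 3, so
vanishing on an edge it vanishes on the whole line through that edge. On the line through the
barycentre `b` and a point `x` it therefore vanishes at `b` and where the line crosses the three
edge lines; for `x` off finitely many lines these four points are distinct, so `F x = 0`. Such
`x` are dense and `F` is continuous.
-/

noncomputable section

/-- Evaluation of a two-variable polynomial at a point of `ℝ²`. -/
def pev (P : MvPolynomial (Fin 2) ℝ) (x : ℝ × ℝ) : ℝ :=
  MvPolynomial.eval ![x.1, x.2] P

open Polynomial

section AlongLines

variable {k V P : Type*} [CommRing k] [AddCommGroup V] [Module k V] [AddTorsor V P]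

def IsPolynomialAlongLines (n : ℕ) (f : P → k) : Prop :=
  ∀ a b : P, ∃ q : k[X], q.natDegree ≤ n ∧ ∀ t, f (AffineMap.lineMap a b t) = q.eval t

namespace IsPolynomialAlongLines

variable {m n : ℕ} {f g : P → k}

theorem mono (hf : IsPolynomialAlongLines m f) (hmn : m ≤ n) : IsPolynomialAlongLines n f :=
  fun a b ↦ (hf a b).imp fun _ ⟨hq, hfq⟩ ↦ ⟨hq.trans hmn, hfq⟩

theorem sub (hf : IsPolynomialAlongLines n f) (hg : IsPolynomialAlongLines n g) :
    IsPolynomialAlongLines n (fun x ↦ f x - g x) := fun a b ↦ by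
  obtain ⟨q, hq, hfq⟩ := hf a b
  obtain ⟨r, hr, hgr⟩ := hg a b
  exact ⟨q - r, (natDegree_sub_le q r).trans (max_le hq hr), fun t ↦ by simp [hfq, hgr]⟩

theorem mul (hf : IsPolynomialAlongLines m f) (hg : IsPolynomialAlongLines n g) :
    IsPolynomialAlongLines (m + n) (fun x ↦ f x * g x) := fun a b ↦ by
  obtain ⟨q, hq, hfq⟩ := hf a b
  obtain ⟨r, hr, hgr⟩ := hg a b
  exact ⟨q * r, natDegree_mul_le_of_le hq hr, fun t ↦ by simp [hfq, hgr]⟩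

theorem comp {V₂ P₂ : Type*} [AddCommGroup V₂] [Module k V₂] [AddTorsor V₂ P₂]
    (hf : IsPolynomialAlongLines n f) (φ : P₂ →ᵃ[k] P) : IsPolynomialAlongLines n (f ∘ φ) :=
  fun a b ↦ by simpa only [Function.comp_apply, AffineMap.apply_lineMap] using hf (φ a) (φ b)

end IsPolynomialAlongLines

theorem isPolynomialAlongLines_const (c : k) : IsPolynomialAlongLines 0 (fun _ : P ↦ c) :=
  fun _ _ ↦ ⟨C c, (natDegree_C c).le, fun _ ↦ (eval_C).symm⟩

theorem AffineMap.isPolynomialAlongLines (φ : P →ᵃ[k] k) : IsPolynomialAlongLines 1 φ :=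
  fun a b ↦ ⟨C (φ b - φ a) * X + C (φ a), natDegree_linear_le, fun t ↦ by
    simp [AffineMap.apply_lineMap, AffineMap.lineMap_apply_ring', mul_comm]⟩

end AlongLines

theorem MvPolynomial.natDegree_aeval_le_totalDegree {σ R : Type*} [CommSemiring R]
    {f : σ → R[X]} (hf : ∀ i, (f i).natDegree ≤ 1) (p : MvPolynomial σ R) :
    (aeval f p).natDegree ≤ p.totalDegree := by
  conv_lhs => rw [p.as_sum, map_sum]
  refine natDegree_sum_le_of_forall_le _ _ fun m hm ↦ ?_
  rw [aeval_monomial, Polynomial.algebraMap_eq]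
  refine (natDegree_C_mul_le _ _).trans <| (natDegree_prod_le _ _).trans ?_
  refine (Finset.sum_le_sum fun i _ ↦ natDegree_pow_le_of_le (m i) (hf i)).trans ?_
  simp only [mul_one]
  exact le_totalDegree hm

theorem MvPolynomial.isPolynomialAlongLines_eval {σ k : Type*} [CommRing k]
    (p : MvPolynomial σ k) : IsPolynomialAlongLines p.totalDegree (fun x : σ → k ↦ eval x p) := by
  intro a b
  refine ⟨aeval (fun i ↦ Polynomial.C (b i - a i) * Polynomial.X + Polynomial.C (a i)) p,
    natDegree_aeval_le_totalDegree (fun _ ↦ natDegree_linear_le) p, fun t ↦ ?_⟩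
  have hC : (evalRingHom t).comp (algebraMap k k[X]) = RingHom.id k := by ext; simp
  rw [aeval_def, polynomial_eval_eval₂, hC]
  refine congrArg (eval₂ _ · p) ?_
  ext i
  simp [AffineMap.pi_lineMap_apply, AffineMap.lineMap_apply_ring', mul_comm]

theorem isPolynomialAlongLines_pev (p : MvPolynomial (Fin 2) ℝ) :
    IsPolynomialAlongLines p.totalDegree (pev p) :=
  -- `(finTwoArrow ℝ ℝ).symm x` is `![x.1, x.2]` by definition.
  p.isPolynomialAlongLines_eval.comp
    (ContinuousLinearEquiv.finTwoArrow ℝ ℝ).symm.toLinearEquiv.toLinearMap.toAffineMap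

theorem continuous_pev (p : MvPolynomial (Fin 2) ℝ) : Continuous (pev p) :=
  (MvPolynomial.continuous_eval p).comp (ContinuousLinearEquiv.finTwoArrow ℝ ℝ).symm.continuous

theorem IsPolynomialAlongLines.apply_lineMap_eq_zero {E : Type*} [AddCommGroup E] [Module ℝ E]
    {n : ℕ} {f : E → ℝ} (hf : IsPolynomialAlongLines n f) {a b : E}
    (h : ∀ x ∈ segment ℝ a b, f x = 0) (t : ℝ) : f (AffineMap.lineMap a b t) = 0 := by
  obtain ⟨q, -, hfq⟩ := hf a b
  have hq : q = 0 := eq_zero_of_infinite_isRoot q <| (Set.Icc_infinite zero_lt_one).mono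
    fun s hs ↦ (hfq s).symm.trans <| h _ <| segment_eq_image_lineMap ℝ a b ▸ ⟨s, hs, rfl⟩
  rw [hfq, hq, eval_zero]

section AffineBasis

variable {ι k V P : Type*} [AddCommGroup V] [AddTorsor V P]

theorem AffineBasis.coord_eq_of_apply_eq [Ring k] [Module k V] [DecidableEq ι]
    (B : AffineBasis ι k P) {i : ι} {φ : P →ᵃ[k] k}
    (h : ∀ j, φ (B j) = if i = j then 1 else 0) : φ = B.coord i :=
  AffineMap.ext_on B.tot (by rintro _ ⟨j, rfl⟩; simp [h, B.coord_apply])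

theorem AffineBasis.eq_lineMap_of_coord_eq_zero [CommRing k] [Module k V]
    (B : AffineBasis (Fin 3) k P) {i : Fin 3} {x : P} (hx : B.coord i x = 0) :
    x = AffineMap.lineMap (B (i + 1)) (B (i + 2)) (B.coord (i + 2) x) := by
  have hsum := B.sum_coord_apply_eq_one x
  rw [Fin.sum_univ_three] at hsum
  refine B.ext_elem fun j ↦ ?_
  rw [AffineMap.apply_lineMap, B.coord_apply, B.coord_apply, AffineMap.lineMap_apply_ring]
  fin_cases i <;> fin_cases j <;> simp at hx ⊢ <;> grind

theorem AffineBasis.apply_eq_zero_of_coord_injective [Field k] [CharZero k] [Module k V]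
    [Fintype ι] (B : AffineBasis ι k P) {f : P → k}
    (hf : IsPolynomialAlongLines (Fintype.card ι) f) (hzero : ∀ i x, B.coord i x = 0 → f x = 0)
    (hcentroid : f (Finset.univ.centroid k B) = 0) {x : P}
    (hx : ∀ i, B.coord i x ≠ (Fintype.card ι : k)⁻¹) (hinj : Function.Injective (B.coord · x)) :
    f x = 0 := by
  have := B.nonempty
  set N : k := (Fintype.card ι : k)
  have hN : N ≠ 0 := Nat.cast_ne_zero.2 Fintype.card_ne_zero
  have hs : ∀ i, 1 - N * B.coord i x ≠ 0 := fun i h ↦ hx i (by field_simp; linear_combination -h)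
  have hcoord : ∀ i t, B.coord i (AffineMap.lineMap (Finset.univ.centroid k B) x t)
      = N⁻¹ * (1 - t * (1 - N * B.coord i x)) := fun i t ↦ by
    rw [AffineMap.apply_lineMap, B.coord_apply_centroid (Finset.mem_univ i), Finset.card_univ,
      AffineMap.lineMap_apply_ring']
    field_simp
    ring
  obtain ⟨q, hq, hfq⟩ := hf (Finset.univ.centroid k B) x
  -- `t = 0` is the centroid; at `t = (1 - N λᵢ x)⁻¹` the line crosses the facet `λᵢ = 0`.
  let root : Option ι → k := fun o ↦ o.elim 0 fun i ↦ (1 - N * B.coord i x)⁻¹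
  have hroot : Function.Injective root := by
    rintro (_ | i) (_ | j) h
    all_goals simp only [root, Option.elim, zero_eq_inv, inv_eq_zero, inv_inj] at h
    · rfl
    · exact absurd h.symm (hs j)
    · exact absurd h (hs i)
    · exact congrArg some (hinj (mul_left_cancel₀ hN (by linear_combination -h)))
  have hq0 : q = 0 := by
    refine eq_zero_of_natDegree_lt_card_of_eval_eq_zero q hroot ?_
      (by simpa using Nat.lt_succ_of_le hq)
    rintro (_ | i)
    · rwa [← hfq, show root none = 0 from rfl, AffineMap.lineMap_apply_zero]
    · rw [← hfq]
      exact hzero i _ (by rw [hcoord]; simp [root, inv_mul_cancel₀ (hs i)])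
  rw [← AffineMap.lineMap_apply_one (k := k) (Finset.univ.centroid k B) x, hfq, hq0, eval_zero]

end AffineBasis

section Density

variable {ι E : Type*} [NormedAddCommGroup E] [NormedSpace ℝ E]

theorem AffineMap.dense_setOf_apply_ne (φ : E →ᵃ[ℝ] ℝ) {a b : E} (hab : φ a ≠ φ b) (c : ℝ) :
    Dense {x | φ x ≠ c} := by
  have hlin : φ.linear ≠ 0 := fun h ↦ hab <| by
    have := φ.linearMap_vsub b a
    simp only [h, LinearMap.zero_apply, vsub_eq_sub] at this
    linarith
  have hsurj := φ.linear.surjective_or_eq_zero.resolve_right hlin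
  exact (dense_compl_singleton c).preimage <|
    AffineMap.isOpenMap_linear_iff.mp (φ.linear.isOpenMap_of_finiteDimensional hsurj)

theorem AffineBasis.dense_setOf_coord_ne_and_injective [FiniteDimensional ℝ E] [Finite ι]
    [Nontrivial ι] (B : AffineBasis ι ℝ E) (c : ℝ) :
    Dense {x | (∀ i, B.coord i x ≠ c) ∧ Function.Injective (B.coord · x)} := by
  have hopen : ∀ (φ : E →ᵃ[ℝ] ℝ) (c : ℝ), IsOpen {x | φ x ≠ c} := fun φ c ↦
    isOpen_ne_fun φ.continuous_of_finiteDimensional continuous_const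
  have hcoord : Dense (⋂ i, {x | B.coord i x ≠ c}) := by
    refine dense_iInter_of_isOpen (fun i ↦ hopen _ _) fun i ↦ ?_
    obtain ⟨j, hj⟩ := exists_ne i
    exact (B.coord i).dense_setOf_apply_ne (a := B i) (b := B j)
      (by simp [B.coord_apply_ne hj.symm]) c
  have hpair : Dense (⋂ p : {p : ι × ι // p.1 ≠ p.2},
      {x | (B.coord p.1.1 - B.coord p.1.2) x ≠ 0}) := by
    refine dense_iInter_of_isOpen (fun p ↦ hopen _ _) fun ⟨(i, j), hij⟩ ↦ ?_
    refine (B.coord i - B.coord j).dense_setOf_apply_ne (a := B i) (b := B j) ?_ 0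
    simp [B.coord_apply_ne hij, B.coord_apply_ne hij.symm]
    norm_num
  convert hcoord.inter_of_isOpen_left hpair (isOpen_iInter_of_finite fun i ↦ hopen _ _) using 1
  ext x
  simp [Function.injective_iff_pairwise_ne, Pairwise, sub_eq_zero]

theorem AffineBasis.eq_zero_of_isPolynomialAlongLines [FiniteDimensional ℝ E] [Fintype ι]
    [Nontrivial ι] (B : AffineBasis ι ℝ E) {f : E → ℝ}
    (hf : IsPolynomialAlongLines (Fintype.card ι) f)
    (hcont : Continuous f) (hzero : ∀ i x, B.coord i x = 0 → f x = 0)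
    (hcentroid : f (Finset.univ.centroid ℝ B) = 0) : f = 0 :=
  hcont.ext_on (B.dense_setOf_coord_ne_and_injective _) continuous_const
    fun _ hx ↦ B.apply_eq_zero_of_coord_injective hf hzero hcentroid hx.1 hx.2

end Density

/-- **Uniqueness of the cubic bubble function.**
Let `v 0, v 1, v 2 ∈ ℝ²` be affinely independent with barycentric coordinate
functions `lam i` (the unique affine functions with `lam i (v j) = δᵢⱼ`).
If a polynomial function `p` of total degree at most 3 vanishes on each of the
three edges of the triangle and takes the value 1 at the barycentre
`(v 0 + v 1 + v 2)/3`, then `p = 27 λ₀ λ₁ λ₂` identically on `ℝ²`. -/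
theorem cubic_bubble_unique
    (v : Fin 3 → ℝ × ℝ) (hv : AffineIndependent ℝ v)
    (lam : Fin 3 → (ℝ × ℝ) →ᵃ[ℝ] ℝ)
    (hlam : ∀ i j : Fin 3, lam i (v j) = if i = j then 1 else 0)
    (P : MvPolynomial (Fin 2) ℝ) (hdeg : P.totalDegree ≤ 3)
    (hedge : ∀ i : Fin 3, ∀ x ∈ segment ℝ (v (i + 1)) (v (i + 2)), pev P x = 0)
    (hbary : pev P ((1 / 3 : ℝ) • (v 0 + v 1 + v 2)) = 1) :
    ∀ x : ℝ × ℝ, pev P x = 27 * lam 0 x * lam 1 x * lam 2 x := by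
  let B : AffineBasis (Fin 3) ℝ (ℝ × ℝ) :=
    ⟨v, hv, hv.affineSpan_eq_top_iff_card_eq_finrank_add_one.2 (by simp)⟩
  have hlamB : ∀ i, lam i = B.coord i := fun i ↦ B.coord_eq_of_apply_eq (hlam i)
  have hcentroid : Finset.univ.centroid ℝ B = (1 / 3 : ℝ) • (v 0 + v 1 + v 2) := by
    simp [Finset.centerMass, Fin.sum_univ_three, B]
    module
  have hbubble : IsPolynomialAlongLines 3 fun x ↦ 27 * lam 0 x * lam 1 x * lam 2 x :=
    (((isPolynomialAlongLines_const 27).mul (lam 0).isPolynomialAlongLines).mul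
      (lam 1).isPolynomialAlongLines).mul (lam 2).isPolynomialAlongLines
  have hlam_cont : ∀ i, Continuous (lam i) := fun i ↦ (lam i).continuous_of_finiteDimensional
  suffices hF : (fun x ↦ pev P x - 27 * lam 0 x * lam 1 x * lam 2 x) = 0 by
    intro x
    simpa [sub_eq_zero] using congrFun hF x
  refine B.eq_zero_of_isPolynomialAlongLines ?_ (by have := continuous_pev P; fun_prop)
    (fun i x hx ↦ ?_) ?_
  · rw [Fintype.card_fin]
    exact ((isPolynomialAlongLines_pev P).mono hdeg).sub hbubble
  · have hPx : pev P x = 0 := by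
      rw [B.eq_lineMap_of_coord_eq_zero hx]
      exact (isPolynomialAlongLines_pev P).apply_lineMap_eq_zero (hedge i) _
    simp only [hPx, hlamB]
    fin_cases i <;> simp at hx <;> simp [hx]
  · rw [← hcentroid] at hbary
    simp only [hbary, hlamB, B.coord_apply_centroid (Finset.mem_univ _), Finset.card_univ,
      Fintype.card_fin]
    norm_num
end
end

section
/- Let B = λ₁ λ₂ λ₃. Then both components of the skew gradient ∇⊥B = (−∂B/∂x₂, ∂B/∂x₁) are polynomial functions of total degree at most 2, and for each i ∈ {1,2,3} and every x ∈ eᵢ one has ∇⊥B(x) · nᵢ = 0. (That is, ∇⊥B belongs to the local interior space Ŝ(K) = {v ∈ P₂(K)² : v·n = 0 on ∂K}.) -/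
/-!
Write `B = λᵢ · (λᵢ₊₁ λᵢ₊₂)`. By the product rule,
`∇⊥B = λᵢ ∇⊥(λᵢ₊₁ λᵢ₊₂) + λᵢ₊₁ λᵢ₊₂ ∇⊥λᵢ`. On the edge `eᵢ` the first term vanishes with `λᵢ`,
and the constant vector `∇⊥λᵢ` is tangent to `eᵢ` because `λᵢ` is constant along `eᵢ`, so it is
orthogonal to `nᵢ`. The same product rule, applied to a product of `m` affine functions, shows by
induction that the components of its skew gradient are polynomials of degree at most `m - 1`.
-/

noncomputable section

/-- Dot product on `ℝ²`. -/
def dot (a b : ℝ × ℝ) : ℝ := a.1 * b.1 + a.2 * b.2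

/-- Skew gradient `∇⊥g = (−∂g/∂x₂, ∂g/∂x₁)` of `g : ℝ² → ℝ`. -/
def perpGrad (g : ℝ × ℝ → ℝ) (x : ℝ × ℝ) : ℝ × ℝ :=
  (-(fderiv ℝ g x (0, 1)), fderiv ℝ g x (1, 0))

open MvPolynomial

lemma dot_add_left (a b c : ℝ × ℝ) : dot (a + b) c = dot a c + dot b c := by
  simp only [dot, Prod.fst_add, Prod.snd_add]
  ring

lemma dot_smul_left (r : ℝ) (a b : ℝ × ℝ) : dot (r • a) b = r * dot a b := by
  simp only [dot, Prod.smul_fst, Prod.smul_snd, smul_eq_mul]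
  ring

/-- In the plane, two vectors orthogonal to the same nonzero vector are parallel. -/
lemma dot_rot_eq_zero_of_dot_eq_zero {u w d : ℝ × ℝ} (hd : d ≠ 0) (hu : dot u d = 0)
    (hw : dot w d = 0) : dot (-u.2, u.1) w = 0 := by
  simp only [dot] at hu hw ⊢
  have h₁ : (-u.2 * w.1 + u.1 * w.2) * d.1 = 0 := by linear_combination w.2 * hu - u.2 * hw
  have h₂ : (-u.2 * w.1 + u.1 * w.2) * d.2 = 0 := by linear_combination u.1 * hw - w.1 * hu
  by_contra hk
  exact hd (Prod.ext ((mul_eq_zero.1 h₁).resolve_left hk) ((mul_eq_zero.1 h₂).resolve_left hk))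

lemma LinearMap.apply_eq_fst_mul_add_snd_mul (L : ℝ × ℝ →ₗ[ℝ] ℝ) (d : ℝ × ℝ) :
    L d = d.1 * L (1, 0) + d.2 * L (0, 1) := by
  conv_lhs => rw [show d = d.1 • ((1 : ℝ), (0 : ℝ)) + d.2 • ((0 : ℝ), (1 : ℝ)) by
    ext <;> simp]
  rw [map_add, map_smul, map_smul, smul_eq_mul, smul_eq_mul]

theorem perpGrad_mul {g h : ℝ × ℝ → ℝ} {x : ℝ × ℝ} (hg : DifferentiableAt ℝ g x)
    (hh : DifferentiableAt ℝ h x) :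
    perpGrad (fun y => g y * h y) x = g x • perpGrad h x + h x • perpGrad g x := by
  simp only [perpGrad, fderiv_fun_mul hg hh]
  ext <;> simp
  ring

section AffineMap

variable (f : (ℝ × ℝ) →ᵃ[ℝ] ℝ)

theorem hasFDerivAt_affineMap (x : ℝ × ℝ) :
    HasFDerivAt f (LinearMap.toContinuousLinearMap f.linear) x := by
  rw [f.decomp]
  exact (LinearMap.toContinuousLinearMap f.linear).hasFDerivAt.add_const (f 0)

theorem differentiable_affineMap : Differentiable ℝ f :=
  fun x => (hasFDerivAt_affineMap f x).differentiableAt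

theorem perpGrad_affineMap (x : ℝ × ℝ) : perpGrad f x = (-f.linear (0, 1), f.linear (1, 0)) := by
  simp [perpGrad, (hasFDerivAt_affineMap f x).fderiv]

theorem dot_perpGrad_affineMap_eq_zero {p q w : ℝ × ℝ} (hpq : p ≠ q) (hf : f p = f q)
    (hw : dot w (q - p) = 0) (x : ℝ × ℝ) : dot (perpGrad f x) w = 0 := by
  rw [perpGrad_affineMap]
  refine dot_rot_eq_zero_of_dot_eq_zero (u := (f.linear (1, 0), f.linear (0, 1)))
    (sub_ne_zero.2 hpq.symm) ?_ hw
  have hlin := f.linearMap_vsub q p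
  rw [LinearMap.apply_eq_fst_mul_add_snd_mul, hf, vsub_self] at hlin
  simp only [dot, vsub_eq_sub] at hlin ⊢
  linarith

theorem affineMap_eq_zero_of_mem_segment {p q x : ℝ × ℝ} (hp : f p = 0) (hq : f q = 0)
    (hx : x ∈ segment ℝ p q) : f x = 0 := by
  rw [segment_eq_image_lineMap] at hx
  obtain ⟨t, -, rfl⟩ := hx
  simp [AffineMap.apply_lineMap, hp, hq]

theorem dot_perpGrad_mul_eq_zero_of_mem_segment {h : ℝ × ℝ → ℝ} {p q w x : ℝ × ℝ} (hpq : p ≠ q)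
    (hp : f p = 0) (hq : f q = 0) (hw : dot w (q - p) = 0) (hx : x ∈ segment ℝ p q)
    (hh : DifferentiableAt ℝ h x) : dot (perpGrad (fun y => f y * h y) x) w = 0 := by
  rw [perpGrad_mul (differentiable_affineMap f x) hh, dot_add_left,
    dot_smul_left, dot_smul_left, affineMap_eq_zero_of_mem_segment f hp hq hx,
    dot_perpGrad_affineMap_eq_zero f hpq (hp.trans hq.symm) hw x]
  ring

end AffineMap

def IsPolynomialOfDegreeLE (d : ℕ) (g : ℝ × ℝ → ℝ) : Prop :=
  ∃ P : MvPolynomial (Fin 2) ℝ, P.totalDegree ≤ d ∧ ∀ x, g x = pev P x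

namespace IsPolynomialOfDegreeLE

lemma const (d : ℕ) (r : ℝ) : IsPolynomialOfDegreeLE d fun _ => r :=
  ⟨C r, by simp, by simp [pev]⟩

lemma fst : IsPolynomialOfDegreeLE 1 Prod.fst :=
  ⟨X 0, by simp, by simp [pev]⟩

lemma snd : IsPolynomialOfDegreeLE 1 Prod.snd :=
  ⟨X 1, by simp, by simp [pev]⟩

lemma add {d : ℕ} {g h : ℝ × ℝ → ℝ} (hg : IsPolynomialOfDegreeLE d g)
    (hh : IsPolynomialOfDegreeLE d h) : IsPolynomialOfDegreeLE d fun x => g x + h x := by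
  obtain ⟨P, hPd, hP⟩ := hg
  obtain ⟨Q, hQd, hQ⟩ := hh
  exact ⟨P + Q, (totalDegree_add P Q).trans (max_le hPd hQd), fun x => by simp [pev, hP, hQ]⟩

lemma mul {d₁ d₂ d : ℕ} {g h : ℝ × ℝ → ℝ} (hg : IsPolynomialOfDegreeLE d₁ g)
    (hh : IsPolynomialOfDegreeLE d₂ h) (hd : d₁ + d₂ ≤ d) :
    IsPolynomialOfDegreeLE d fun x => g x * h x := by
  obtain ⟨P, hPd, hP⟩ := hg
  obtain ⟨Q, hQd, hQ⟩ := hh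
  exact ⟨P * Q, (totalDegree_mul P Q).trans ((add_le_add hPd hQd).trans hd),
    fun x => by simp [pev, hP, hQ]⟩

lemma affineMap (f : (ℝ × ℝ) →ᵃ[ℝ] ℝ) : IsPolynomialOfDegreeLE 1 f := by
  have hf : (f : ℝ × ℝ → ℝ) = fun x => (f 0 + x.1 * f.linear (1, 0)) + x.2 * f.linear (0, 1) := by
    funext x
    rw [congrFun f.decomp x, Pi.add_apply, LinearMap.apply_eq_fst_mul_add_snd_mul]
    ring
  rw [hf]
  exact ((const 1 _).add (fst.mul (const 0 _) le_rfl)).add (snd.mul (const 0 _) le_rfl)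

end IsPolynomialOfDegreeLE

section ProdAffineMap

variable {ι : Type*} (f : ι → (ℝ × ℝ) →ᵃ[ℝ] ℝ)

theorem differentiable_prod_affineMap (s : Finset ι) :
    Differentiable ℝ fun y => ∏ i ∈ s, f i y := by
  classical
  exact fun x => (HasFDerivAt.finsetProd fun i _ => hasFDerivAt_affineMap (f i) x).differentiableAt

theorem isPolynomialOfDegreeLE_prod_affineMap (s : Finset ι) :
    IsPolynomialOfDegreeLE s.card fun y => ∏ i ∈ s, f i y := by
  induction s using Finset.cons_induction with
  | empty => simpa using IsPolynomialOfDegreeLE.const 0 1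
  | cons a s ha ih =>
    simp only [Finset.prod_cons, Finset.card_cons]
    exact (IsPolynomialOfDegreeLE.affineMap (f a)).mul ih (by omega)

theorem isPolynomialOfDegreeLE_dot_perpGrad_prod_affineMap {s : Finset ι} (hs : s.Nonempty)
    (w : ℝ × ℝ) :
    IsPolynomialOfDegreeLE (s.card - 1)
      fun x => dot (perpGrad (fun y => ∏ i ∈ s, f i y) x) w := by
  induction hs using Finset.Nonempty.cons_induction with
  | singleton a =>
    simp only [Finset.prod_singleton, perpGrad_affineMap]
    exact IsPolynomialOfDegreeLE.const _ _
  | cons a s ha hs ih =>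
    have hcard := hs.card_pos
    simp only [Finset.prod_cons, Finset.card_cons, perpGrad_mul (differentiable_affineMap (f a) _)
      (differentiable_prod_affineMap f s _), dot_add_left, dot_smul_left, perpGrad_affineMap]
    exact ((IsPolynomialOfDegreeLE.affineMap (f a)).mul ih (by omega)).add
      ((isPolynomialOfDegreeLE_prod_affineMap f s).mul (.const 0 _) (by omega))

end ProdAffineMap

lemma Fin.prod_univ_three_eq_mul {M : Type*} [CommMonoid M] (g : Fin 3 → M) (i : Fin 3) :
    ∏ j, g j = g i * (g (i + 1) * g (i + 2)) := by
  rw [← Equiv.prod_comp (Equiv.addLeft i) g, Fin.prod_univ_three]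
  simp [mul_assoc]

theorem perpGrad_bubble_mem_interior_space_general
    (v : Fin 3 → ℝ × ℝ) (hv : AffineIndependent ℝ v)
    (lam : Fin 3 → (ℝ × ℝ) →ᵃ[ℝ] ℝ)
    (hlam : ∀ i j : Fin 3, lam i (v j) = if i = j then 1 else 0)
    (n : Fin 3 → ℝ × ℝ)
    (hn_normal : ∀ i : Fin 3, dot (n i) (v (i + 2) - v (i + 1)) = 0)
    (B : ℝ × ℝ → ℝ) (hB : ∀ x : ℝ × ℝ, B x = lam 0 x * lam 1 x * lam 2 x) :
    (∃ P Q : MvPolynomial (Fin 2) ℝ, P.totalDegree ≤ 2 ∧ Q.totalDegree ≤ 2 ∧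
      ∀ x : ℝ × ℝ, perpGrad B x = (pev P x, pev Q x)) ∧
    (∀ i : Fin 3, ∀ x ∈ segment ℝ (v (i + 1)) (v (i + 2)),
      dot (perpGrad B x) (n i) = 0) := by
  obtain rfl : B = fun x => ∏ i, lam i x := funext fun x => by rw [hB, Fin.prod_univ_three]
  refine ⟨?_, fun i x hx => ?_⟩
  · obtain ⟨P, hPd, hP⟩ :=
      isPolynomialOfDegreeLE_dot_perpGrad_prod_affineMap lam Finset.univ_nonempty (1, 0)
    obtain ⟨Q, hQd, hQ⟩ :=
      isPolynomialOfDegreeLE_dot_perpGrad_prod_affineMap lam Finset.univ_nonempty (0, 1)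
    refine ⟨P, Q, by simpa using hPd, by simpa using hQd, fun x => Prod.ext ?_ ?_⟩
    · simpa [dot] using hP x
    · simpa [dot] using hQ x
  · simp only [Fin.prod_univ_three_eq_mul _ i]
    refine dot_perpGrad_mul_eq_zero_of_mem_segment (lam i) (hv.injective.ne (by omega))
      (by simp [hlam]) (by simp [hlam]) (hn_normal i) hx
      ((differentiable_affineMap _ x).mul (differentiable_affineMap _ x))

/-- **The skew gradient of the cubic bubble lies in the local interior space
`Ŝ(K)`.** Let `v 0, v 1, v 2` be affinely independent, `lam i` the barycentric
coordinates, `n i` a unit normal to the edge `e i` opposite `v i`, and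
`B = λ₀ λ₁ λ₂`. Then both components of `∇⊥B` are polynomial functions of
total degree at most 2, and `∇⊥B · n i = 0` at every point of each edge `e i`. -/
theorem perpGrad_bubble_mem_interior_space
    (v : Fin 3 → ℝ × ℝ) (hv : AffineIndependent ℝ v)
    (lam : Fin 3 → (ℝ × ℝ) →ᵃ[ℝ] ℝ)
    (hlam : ∀ i j : Fin 3, lam i (v j) = if i = j then 1 else 0)
    (n : Fin 3 → ℝ × ℝ)
    (hn_unit : ∀ i : Fin 3, (n i).1 ^ 2 + (n i).2 ^ 2 = 1)
    (hn_normal : ∀ i : Fin 3, dot (n i) (v (i + 2) - v (i + 1)) = 0)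
    (B : ℝ × ℝ → ℝ) (hB : ∀ x : ℝ × ℝ, B x = lam 0 x * lam 1 x * lam 2 x) :
    (∃ P Q : MvPolynomial (Fin 2) ℝ, P.totalDegree ≤ 2 ∧ Q.totalDegree ≤ 2 ∧
      ∀ x : ℝ × ℝ, perpGrad B x = (pev P x, pev Q x)) ∧
    (∀ i : Fin 3, ∀ x ∈ segment ℝ (v (i + 1)) (v (i + 2)),
      dot (perpGrad B x) (n i) = 0) :=
  perpGrad_bubble_mem_interior_space_general v hv lam hlam n hn_normal B hB
end
end

section
/- Let a, b ∈ ℝ² with a ≠ b, let n be a unit vector normal to the segment [a,b], and let χ : ℝ² → ℝ be C¹ on a neighbourhood of [a,b] with χ(a) = χ(b) = 0 and ∫_{[a,b]} χ ds = 0. Then for every affine function γ : ℝ² → ℝ, ∫_{[a,b]} γ (∇⊥χ · n) ds = 0. -/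
open MeasureTheory

noncomputable section

/-- Line integral `∫_{[a,b]} h ds = ‖b − a‖ ∫₀¹ h((1−s)a + sb) ds`
(Euclidean length). -/
def lineIntegral (h : ℝ × ℝ → ℝ) (a b : ℝ × ℝ) : ℝ :=
  Real.sqrt ((b.1 - a.1) ^ 2 + (b.2 - a.2) ^ 2) *
    ∫ s in (0 : ℝ)..1, h ((1 - s) • a + s • b)

/-! Parametrize the edge by `x s = lineMap a b s`. Since `n ⊥ (b - a)` in the plane, the quarter
turn `(n.2, -n.1)` of `n` is a multiple `t • (b - a)` of the tangent, so `∇⊥χ · n = t (χ ∘ x)'`.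
As `γ ∘ x` is affine in `s`, one integration by parts turns `∫ (γ ∘ x) (χ ∘ x)'` into boundary
terms, which vanish because `χ a = χ b = 0`, minus a multiple of `∫ χ ∘ x`, which vanishes by
hypothesis. -/

open Set AffineMap intervalIntegral

theorem integral_affine_mul_deriv_eq_zero {f f' : ℝ → ℝ} {lo hi : ℝ} (p q : ℝ)
    (hf : ∀ s ∈ uIcc lo hi, HasDerivAt f (f' s) s) (hf' : IntervalIntegrable f' volume lo hi)
    (hlo : f lo = 0) (hhi : f hi = 0) (hmean : ∫ s in lo..hi, f s = 0) :
    ∫ s in lo..hi, (p + q * s) * f' s = 0 := by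
  have hweight : ∀ s ∈ uIcc lo hi, HasDerivAt (fun s => p + q * s) q s := fun s _ => by
    simpa using ((hasDerivAt_id s).const_mul q).const_add p
  rw [integral_mul_deriv_eq_deriv_mul hweight hf intervalIntegrable_const hf',
    intervalIntegral.integral_const_mul, hlo, hhi, hmean]
  ring

section Segment

variable {E F : Type*} [NormedAddCommGroup E] [NormedSpace ℝ E]
  [NormedAddCommGroup F] [NormedSpace ℝ F]
  {g : E → F} {U : Set E} {a b : E}

theorem ContDiffOn.hasDerivAt_comp_lineMap (hg : ContDiffOn ℝ 1 g U) (hU : IsOpen U)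
    (hseg : segment ℝ a b ⊆ U) {s : ℝ} (hs : s ∈ Icc 0 1) :
    HasDerivAt (fun s => g (AffineMap.lineMap a b s))
      (fderiv ℝ g (AffineMap.lineMap a b s) (b - a)) s :=
  have hmem := hU.mem_nhds (hseg (lineMap_mem_segment ℝ a b hs))
  ((hg.differentiableOn one_ne_zero).differentiableAt hmem).hasFDerivAt.comp_hasDerivAt s
    hasDerivAt_lineMap

theorem ContDiffOn.continuousOn_fderiv_comp_lineMap (hg : ContDiffOn ℝ 1 g U) (hU : IsOpen U)
    (hseg : segment ℝ a b ⊆ U) :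
    ContinuousOn (fun s : ℝ => fderiv ℝ g (AffineMap.lineMap a b s) (b - a)) (Icc 0 1) :=
  ((hg.continuousOn_fderiv_of_isOpen hU le_rfl).comp AffineMap.lineMap_continuous.continuousOn
    fun _ hs => hseg (lineMap_mem_segment ℝ a b hs)).clm_apply continuousOn_const

end Segment

theorem dot_perpGrad (g : ℝ × ℝ → ℝ) (x n : ℝ × ℝ) :
    dot (perpGrad g x) n = fderiv ℝ g x (n.2, -n.1) := by
  have hrot : ((n.2, -n.1) : ℝ × ℝ) =
      n.2 • ((1 : ℝ), (0 : ℝ)) + (-n.1) • ((0 : ℝ), (1 : ℝ)) := by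
    ext <;> simp
  rw [hrot, map_add, map_smul, map_smul, dot, perpGrad, smul_eq_mul, smul_eq_mul]
  ring

theorem rotate_eq_smul_of_dot_eq_zero {n c : ℝ × ℝ} (hc : c.1 ^ 2 + c.2 ^ 2 ≠ 0)
    (hnc : dot n c = 0) :
    ((n.2, -n.1) : ℝ × ℝ) = ((n.2 * c.1 - n.1 * c.2) / (c.1 ^ 2 + c.2 ^ 2)) • c := by
  rw [dot] at hnc
  ext <;> simp only [Prod.smul_fst, Prod.smul_snd, smul_eq_mul] <;> field_simp
  · linear_combination c.2 * hnc
  · linear_combination (-c.1) * hnc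

theorem edge_moment_vanishes_general
    (a b : ℝ × ℝ)
    (n : ℝ × ℝ)
    (hn_normal : dot n (b - a) = 0)
    (U : Set (ℝ × ℝ)) (hU : IsOpen U) (hseg : segment ℝ a b ⊆ U)
    (χ : ℝ × ℝ → ℝ) (hχ : ContDiffOn ℝ 1 χ U)
    (ha : χ a = 0) (hb : χ b = 0)
    (hmean : lineIntegral χ a b = 0) :
    ∀ γ : (ℝ × ℝ) →ᵃ[ℝ] ℝ,
      lineIntegral (fun x => γ x * dot (perpGrad χ x) n) a b = 0 := by
  intro γ
  simp only [lineIntegral, ← lineMap_apply_module] at hmean ⊢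
  by_cases hlen : (b.1 - a.1) ^ 2 + (b.2 - a.2) ^ 2 = 0
  · simp [hlen]
  have hmean' := (mul_eq_zero.1 hmean).resolve_left
    (Real.sqrt_ne_zero'.2 (lt_of_le_of_ne (by positivity) (Ne.symm hlen)))
  set t := (n.2 * (b - a).1 - n.1 * (b - a).2) / ((b - a).1 ^ 2 + (b - a).2 ^ 2)
  have hintegrand : ∀ s : ℝ, γ (lineMap a b s) * dot (perpGrad χ (lineMap a b s)) n
      = (t * γ a + t * (γ b - γ a) * s) * fderiv ℝ χ (lineMap a b s) (b - a) := fun s => by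
    rw [dot_perpGrad, rotate_eq_smul_of_dot_eq_zero (by simpa using hlen) hn_normal, map_smul,
      γ.apply_lineMap, lineMap_apply_ring', smul_eq_mul]
    ring
  have hI : uIcc (0 : ℝ) 1 = Icc 0 1 := uIcc_of_le zero_le_one
  have hderiv : ∀ s ∈ uIcc (0 : ℝ) 1, HasDerivAt (fun s => χ (lineMap a b s))
      (fderiv ℝ χ (lineMap a b s) (b - a)) s := fun s hs =>
    hχ.hasDerivAt_comp_lineMap hU hseg (hI ▸ hs)
  have hcont := hχ.continuousOn_fderiv_comp_lineMap hU hseg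
  rw [← hI] at hcont
  simp only [hintegrand]
  rw [integral_affine_mul_deriv_eq_zero _ _ hderiv hcont.intervalIntegrable (by simp [ha])
    (by simp [hb]) hmean', mul_zero]

/-- **Edge identity for the commuting BDFM1 projection.**
Let `a ≠ b` in `ℝ²`, `n` a unit normal to the segment `[a, b]`, and `χ` a
`C¹` function on an open neighbourhood of `[a, b]` with `χ(a) = χ(b) = 0`
and `∫_{[a,b]} χ ds = 0`. Then for every affine `γ : ℝ² → ℝ`,
`∫_{[a,b]} γ (∇⊥χ · n) ds = 0`. -/
theorem edge_moment_vanishes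
    (a b : ℝ × ℝ) (hab : a ≠ b)
    (n : ℝ × ℝ) (hn_unit : n.1 ^ 2 + n.2 ^ 2 = 1)
    (hn_normal : dot n (b - a) = 0)
    (U : Set (ℝ × ℝ)) (hU : IsOpen U) (hseg : segment ℝ a b ⊆ U)
    (χ : ℝ × ℝ → ℝ) (hχ : ContDiffOn ℝ 1 χ U)
    (ha : χ a = 0) (hb : χ b = 0)
    (hmean : lineIntegral χ a b = 0) :
    ∀ γ : (ℝ × ℝ) →ᵃ[ℝ] ℝ,
      lineIntegral (fun x => γ x * dot (perpGrad χ x) n) a b = 0 :=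
  edge_moment_vanishes_general a b n hn_normal U hU hseg χ hχ ha hb hmean
end
end

section
/- Let χ : ℝ² → ℝ be C¹ on a neighbourhood of the triangle K with χ(vᵢ) = 0 for i = 1,2,3 and ∫_{eᵢ} χ ds = 0 for each edge eᵢ. Then for every affine function γ : ℝ² → ℝ, ∫_K ∇γ(x) · ∇⊥χ(x) dx = 0. -/
open MeasureTheory

noncomputable section

/-- Gradient `∇g = (∂g/∂x₁, ∂g/∂x₂)` of `g : ℝ² → ℝ`. -/
def grad2 (g : ℝ × ℝ → ℝ) (x : ℝ × ℝ) : ℝ × ℝ :=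
  (fderiv ℝ g x (1, 0), fderiv ℝ g x (0, 1))

/-!
With `w = (∂₂γ, -∂₁γ)` the integrand `∇γ · ∇⊥χ` is the directional derivative `∂_w χ`. The affine
map `T p = v₀ + p₁ (v₁ - v₀) + p₂ (v₂ - v₀)` carries the reference triangle
`{p₁, p₂ ≥ 0, p₁ + p₂ ≤ 1}` onto `K`. If `T` is singular, `K` is a null set. Otherwise
`w = DT q`, and the change of variables turns `∫_K ∂_w χ` into `|det DT| ∫ ∂_q (χ ∘ T)` over the
reference triangle. By Fubini and the fundamental theorem of calculus, the integrals of `∂₁` and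
`∂₂` over the reference triangle are differences of integrals over its edges, and these are the
edge integrals of `χ` up to the nonzero edge lengths.
-/

open Set

theorem intervalIntegral_comp_one_sub {E : Type*} [NormedAddCommGroup E] [NormedSpace ℝ E]
    (g : ℝ → E) : ∫ s in (0 : ℝ)..1, g (1 - s) = ∫ s in (0 : ℝ)..1, g s := by
  simp [intervalIntegral.integral_comp_sub_left]

def refTriangle : Set (ℝ × ℝ) := {p | 0 ≤ p.1 ∧ 0 ≤ p.2 ∧ p.1 + p.2 ≤ 1}

theorem mem_refTriangle_iff {x y : ℝ} :
    (x, y) ∈ refTriangle ↔ y ∈ Icc (0 : ℝ) 1 ∧ x ∈ Icc 0 (1 - y) := by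
  simp only [refTriangle, mem_ofPred_eq, mem_Icc]
  constructor
  · rintro ⟨hx, hy, hxy⟩
    exact ⟨⟨hy, by linarith⟩, hx, by linarith⟩
  · rintro ⟨⟨hy, -⟩, hx, hxy⟩
    exact ⟨hx, hy, by linarith⟩

theorem swap_mem_refTriangle {p : ℝ × ℝ} : p.swap ∈ refTriangle ↔ p ∈ refTriangle := by
  simp only [refTriangle, mem_ofPred_eq, Prod.fst_swap, Prod.snd_swap, add_comm p.2]
  tauto

theorem isClosed_refTriangle : IsClosed refTriangle :=
  (isClosed_le continuous_const continuous_fst).inter <|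
    (isClosed_le continuous_const continuous_snd).inter <|
      isClosed_le (continuous_fst.add continuous_snd) continuous_const

theorem measurableSet_refTriangle : MeasurableSet refTriangle :=
  isClosed_refTriangle.measurableSet

theorem isCompact_refTriangle : IsCompact refTriangle :=
  isCompact_Icc.of_isClosed_subset isClosed_refTriangle fun p ⟨h₁, h₂, h₁₂⟩ ↦
    (⟨⟨h₁, h₂⟩, by linarith, by linarith⟩ : p ∈ Icc ((0 : ℝ), (0 : ℝ)) (1, 1))

theorem convex_refTriangle : Convex ℝ refTriangle :=
  (convex_halfSpace_ge (LinearMap.fst ℝ ℝ ℝ).isLinear 0).inter <|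
    (convex_halfSpace_ge (LinearMap.snd ℝ ℝ ℝ).isLinear 0).inter <|
      convex_halfSpace_le (LinearMap.fst ℝ ℝ ℝ + LinearMap.snd ℝ ℝ ℝ).isLinear 1

theorem setIntegral_refTriangle {g : ℝ × ℝ → ℝ} (hg : IntegrableOn g refTriangle) :
    ∫ p in refTriangle, g p = ∫ y in (0 : ℝ)..1, ∫ x in (0 : ℝ)..1 - y, g (x, y) := by
  have slice (y : ℝ) : ∫ x, refTriangle.indicator g (x, y) =
      (Icc 0 1).indicator (fun y ↦ ∫ x in (0 : ℝ)..1 - y, g (x, y)) y := by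
    by_cases hy : y ∈ Icc (0 : ℝ) 1
    · rw [indicator_of_mem hy, intervalIntegral.integral_of_le (by linarith [hy.2]),
        ← integral_Icc_eq_integral_Ioc, ← integral_indicator measurableSet_Icc]
      congr 1 with x
      simp only [indicator, mem_refTriangle_iff, hy, true_and]
    · simp [indicator, mem_refTriangle_iff, hy]
  rw [← integral_indicator measurableSet_refTriangle, Measure.volume_eq_prod,
    integral_prod_symm _ ((integrable_indicator_iff measurableSet_refTriangle).2 hg)]
  simp_rw [slice]
  rw [integral_indicator measurableSet_Icc, integral_Icc_eq_integral_Ioc,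
    ← intervalIntegral.integral_of_le zero_le_one]

theorem setIntegral_refTriangle_comp_swap (g : ℝ × ℝ → ℝ) :
    ∫ p in refTriangle, g p.swap = ∫ p in refTriangle, g p := by
  have h : Prod.swap ⁻¹' refTriangle = refTriangle := ext fun _ ↦ swap_mem_refTriangle
  conv_lhs => rw [← h]
  exact Measure.measurePreserving_swap.setIntegral_preimage_emb
    MeasurableEquiv.prodComm.measurableEmbedding g _

section Partials

variable {U : Set (ℝ × ℝ)} {f : ℝ × ℝ → ℝ}

theorem integrableOn_refTriangle_fderiv_apply (hU : IsOpen U) (hTU : refTriangle ⊆ U)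
    (hf : ContDiffOn ℝ 1 f U) (u : ℝ × ℝ) :
    IntegrableOn (fun p ↦ fderiv ℝ f p u) refTriangle :=
  (((hf.continuousOn_fderiv_of_isOpen hU le_rfl).clm_apply continuousOn_const).mono
    hTU).integrableOn_compact isCompact_refTriangle

theorem setIntegral_refTriangle_fderiv_fst (hU : IsOpen U) (hTU : refTriangle ⊆ U)
    (hf : ContDiffOn ℝ 1 f U) :
    ∫ p in refTriangle, fderiv ℝ f p (1, 0) =
      (∫ y in (0 : ℝ)..1, f (1 - y, y)) - ∫ y in (0 : ℝ)..1, f (0, y) := by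
  have hslice : ∀ y ∈ uIcc (0 : ℝ) 1,
      ∫ x in (0 : ℝ)..1 - y, fderiv ℝ f (x, y) (1, 0) = f (1 - y, y) - f (0, y) := by
    intro y hy
    rw [uIcc_of_le zero_le_one] at hy
    have hmaps : MapsTo (fun x ↦ (x, y)) (uIcc 0 (1 - y)) U := fun x hx ↦
      hTU (mem_refTriangle_iff.2 ⟨hy, by rwa [uIcc_of_le (by linarith [hy.2])] at hx⟩)
    refine intervalIntegral.integral_eq_sub_of_hasDerivAt (f := fun x ↦ f (x, y)) (fun x hx ↦ ?_) ?_
    · exact ((hf.differentiableOn one_ne_zero).differentiableAt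
        (hU.mem_nhds (hmaps hx))).hasFDerivAt.comp_hasDerivAt x
          ((hasDerivAt_id x).prodMk (hasDerivAt_const x y))
    · exact (((hf.continuousOn_fderiv_of_isOpen hU le_rfl).clm_apply continuousOn_const).comp
        (by fun_prop) hmaps).intervalIntegrable
  have hcurve {e : ℝ → ℝ × ℝ} (he : Continuous e) (hmem : ∀ y ∈ Icc (0 : ℝ) 1, e y ∈ refTriangle) :
      IntervalIntegrable (fun y ↦ f (e y)) volume 0 1 :=
    (hf.continuousOn.comp he.continuousOn fun y hy ↦
      hTU (hmem y (by rwa [uIcc_of_le zero_le_one] at hy))).intervalIntegrable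
  rw [setIntegral_refTriangle (integrableOn_refTriangle_fderiv_apply hU hTU hf _),
    intervalIntegral.integral_congr hslice]
  exact intervalIntegral.integral_sub
    (hcurve (e := fun y ↦ (1 - y, y)) (by fun_prop) fun y hy ↦
      mem_refTriangle_iff.2 ⟨hy, by simp [hy.2]⟩)
    (hcurve (e := fun y ↦ (0, y)) (by fun_prop) fun y hy ↦
      mem_refTriangle_iff.2 ⟨hy, by simp [hy.2]⟩)

theorem setIntegral_refTriangle_fderiv_snd (hU : IsOpen U) (hTU : refTriangle ⊆ U)
    (hf : ContDiffOn ℝ 1 f U) :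
    ∫ p in refTriangle, fderiv ℝ f p (0, 1) =
      (∫ x in (0 : ℝ)..1, f (x, 1 - x)) - ∫ x in (0 : ℝ)..1, f (x, 0) := by
  let e := ContinuousLinearEquiv.prodComm ℝ ℝ ℝ
  have hswap (p : ℝ × ℝ) : fderiv ℝ (f ∘ e) p (1, 0) = fderiv ℝ f p.swap (0, 1) := by
    rw [e.comp_right_fderiv]
    rfl
  rw [← setIntegral_refTriangle_comp_swap]
  simp_rw [← hswap]
  exact setIntegral_refTriangle_fderiv_fst (hU.preimage e.continuous)
    (fun p hp ↦ hTU (swap_mem_refTriangle.2 hp))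
    (hf.comp e.contDiff.contDiffOn (mapsTo_preimage _ _))

theorem setIntegral_refTriangle_fderiv_eq_zero (hU : IsOpen U) (hTU : refTriangle ⊆ U)
    (hf : ContDiffOn ℝ 1 f U)
    (h₁ : ∫ y in (0 : ℝ)..1, f (1 - y, y) = 0) (h₂ : ∫ y in (0 : ℝ)..1, f (0, y) = 0)
    (h₃ : ∫ x in (0 : ℝ)..1, f (x, 0) = 0) (u : ℝ × ℝ) :
    ∫ p in refTriangle, fderiv ℝ f p u = 0 := by
  have h₁' : ∫ x in (0 : ℝ)..1, f (x, 1 - x) = 0 := by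
    simpa using (intervalIntegral_comp_one_sub fun y ↦ f (1 - y, y)).trans h₁
  have hu : u = u.1 • (1, 0) + u.2 • (0, 1) := by ext <;> simp
  have hint := integrableOn_refTriangle_fderiv_apply hU hTU hf
  rw [hu]
  simp only [map_add, map_smul, smul_eq_mul]
  rw [integral_add ((hint _).const_mul _) ((hint _).const_mul _), integral_const_mul,
    integral_const_mul, setIntegral_refTriangle_fderiv_fst hU hTU hf,
    setIntegral_refTriangle_fderiv_snd hU hTU hf, h₁, h₂, h₁', h₃]
  simp

end Partials

theorem lineIntegral_comm (h : ℝ × ℝ → ℝ) (a b : ℝ × ℝ) :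
    lineIntegral h a b = lineIntegral h b a := by
  have hlen : (b.1 - a.1) ^ 2 + (b.2 - a.2) ^ 2 = (a.1 - b.1) ^ 2 + (a.2 - b.2) ^ 2 := by ring
  have hrev : ∫ s in (0 : ℝ)..1, h ((1 - s) • a + s • b) =
      ∫ s in (0 : ℝ)..1, h ((1 - s) • b + s • a) := by
    simpa [add_comm] using intervalIntegral_comp_one_sub fun s ↦ h ((1 - s) • b + s • a)
  rw [lineIntegral, lineIntegral, hlen, hrev]

theorem intervalIntegral_eq_zero_of_lineIntegral_eq_zero {h : ℝ × ℝ → ℝ} {a b : ℝ × ℝ}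
    (hab : a ≠ b) (h0 : lineIntegral h a b = 0) :
    ∫ s in (0 : ℝ)..1, h ((1 - s) • a + s • b) = 0 := by
  refine (mul_eq_zero.1 h0).resolve_left fun hlen ↦ hab ?_
  rw [Real.sqrt_eq_zero (by positivity), add_eq_zero_iff_of_nonneg (by positivity) (by positivity),
    sq_eq_zero_iff, sq_eq_zero_iff, sub_eq_zero, sub_eq_zero] at hlen
  exact Prod.ext hlen.1.symm hlen.2.symm

def edgeMap (a b c : ℝ × ℝ) : ℝ × ℝ →L[ℝ] ℝ × ℝ :=
  (ContinuousLinearMap.fst ℝ ℝ ℝ).smulRight (b - a) +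
    (ContinuousLinearMap.snd ℝ ℝ ℝ).smulRight (c - a)

@[simp]
theorem edgeMap_apply (a b c p : ℝ × ℝ) : edgeMap a b c p = p.1 • (b - a) + p.2 • (c - a) :=
  rfl

theorem convexHull_eq_image_refTriangle (a b c : ℝ × ℝ) :
    convexHull ℝ {a, b, c} = (fun p ↦ a + edgeMap a b c p) '' refTriangle := by
  apply Subset.antisymm
  · refine convexHull_min ?_ ?_
    · rintro x (rfl | rfl | rfl)
      · exact ⟨(0, 0), by norm_num [refTriangle], by simp⟩
      · exact ⟨(1, 0), by norm_num [refTriangle], by simp⟩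
      · exact ⟨(0, 1), by norm_num [refTriangle], by simp⟩
    · rw [← image_image (a + ·) (edgeMap a b c)]
      exact (convex_refTriangle.linear_image _).translate a
  · rintro _ ⟨p, ⟨h₁, h₂, h₁₂⟩, rfl⟩
    have hp : a + edgeMap a b c p = (1 - p.1 - p.2) • a + p.1 • b + p.2 • c := by
      simp only [edgeMap_apply]
      module
    have hmem := (convex_convexHull ℝ {a, b, c}).sum_mem (t := Finset.univ)
      (w := ![1 - p.1 - p.2, p.1, p.2]) (z := ![a, b, c])
      (fun i _ ↦ by fin_cases i <;> simp <;> linarith) (by simp [Fin.sum_univ_three]; ring)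
      (fun i _ ↦ by fin_cases i <;> exact subset_convexHull ℝ _ (by simp))
    show a + edgeMap a b c p ∈ _
    rw [hp]
    simpa [Fin.sum_univ_three] using hmem

theorem setIntegral_affine_image_fderiv {E : Type*} [NormedAddCommGroup E] [NormedSpace ℝ E]
    [FiniteDimensional ℝ E] [MeasurableSpace E] [BorelSpace E] (μ : Measure E)
    [μ.IsAddHaarMeasure] {L : E →L[ℝ] E} (hL : Function.Injective L) (a : E) {s : Set E}
    (hs : MeasurableSet s) {χ : E → ℝ} (hχ : ∀ p ∈ s, DifferentiableAt ℝ χ (a + L p)) (q : E) :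
    ∫ x in (fun p ↦ a + L p) '' s, fderiv ℝ χ x (L q) ∂μ =
      |L.det| * ∫ p in s, fderiv ℝ (fun p ↦ χ (a + L p)) p q ∂μ := by
  have hT (p : E) : HasFDerivAt (fun p ↦ a + L p) L p := L.hasFDerivAt.const_add a
  rw [integral_image_eq_integral_abs_det_fderiv_smul μ hs (fun p _ ↦ (hT p).hasFDerivWithinAt)
    (fun p _ q _ h ↦ hL (add_left_cancel h)), ← smul_eq_mul, ← integral_smul]
  refine setIntegral_congr_fun hs fun p hp ↦ ?_
  have hchain : HasFDerivAt (fun p ↦ χ (a + L p)) ((fderiv ℝ χ (a + L p)).comp L) p :=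
    (hχ p hp).hasFDerivAt.comp p (hT p)
  rw [hchain.fderiv, ContinuousLinearMap.comp_apply]

theorem addHaar_affine_image_eq_zero {E : Type*} [NormedAddCommGroup E] [NormedSpace ℝ E]
    [FiniteDimensional ℝ E] [MeasurableSpace E] [BorelSpace E] (μ : Measure E)
    [μ.IsAddHaarMeasure] {L : E →L[ℝ] E} (hL : L.det = 0) (a : E) (s : Set E) :
    μ ((fun p ↦ a + L p) '' s) = 0 := by
  rw [← image_image (a + ·) L, image_add_left, measure_preimage_add,
    Measure.addHaar_image_continuousLinearMap]
  simp [show LinearMap.det (L : E →ₗ[ℝ] E) = 0 from hL]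

theorem setIntegral_convexHull_fderiv_eq_zero (a b c : ℝ × ℝ) {U : Set (ℝ × ℝ)} (hU : IsOpen U)
    (hKU : convexHull ℝ {a, b, c} ⊆ U) {χ : ℝ × ℝ → ℝ} (hχ : ContDiffOn ℝ 1 χ U)
    (hbc : lineIntegral χ b c = 0) (hca : lineIntegral χ c a = 0) (hab : lineIntegral χ a b = 0)
    (w : ℝ × ℝ) : ∫ x in convexHull ℝ {a, b, c}, fderiv ℝ χ x w = 0 := by
  set L := edgeMap a b c
  rw [convexHull_eq_image_refTriangle] at hKU ⊢
  by_cases hdet : L.det = 0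
  · exact setIntegral_measure_zero _ (addHaar_affine_image_eq_zero volume hdet a _)
  have hL : Function.Bijective L := (LinearMap.equivOfDetNeZero _ hdet).bijective
  obtain ⟨q, rfl⟩ := hL.2 w
  have hTU : refTriangle ⊆ (fun p ↦ a + L p) ⁻¹' U := image_subset_iff.1 hKU
  have hne {p p' : ℝ × ℝ} (hpp' : p ≠ p') : a + L p ≠ a + L p' :=
    fun h ↦ hpp' (hL.1 (add_left_cancel h))
  have edge {p p' : ℝ × ℝ} (hpp' : p ≠ p') (h0 : lineIntegral χ (a + L p) (a + L p') = 0) :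
      ∫ s in (0 : ℝ)..1, χ (a + L ((1 - s) • p + s • p')) = 0 := by
    refine (intervalIntegral.integral_congr fun s _ ↦ congrArg χ ?_).trans
      (intervalIntegral_eq_zero_of_lineIntegral_eq_zero (hne hpp') h0)
    simp only [map_add, map_smul]
    module
  rw [setIntegral_affine_image_fderiv volume hL.1 a measurableSet_refTriangle
      (fun p hp ↦ (hχ.differentiableOn one_ne_zero).differentiableAt (hU.mem_nhds (hTU hp))),
    setIntegral_refTriangle_fderiv_eq_zero (f := fun p ↦ χ (a + L p)) (hU.preimage (by fun_prop))
      hTU (hχ.comp (by fun_prop) (mapsTo_preimage _ _)), mul_zero]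
  · simpa using edge (p := (1, 0)) (p' := (0, 1)) (by simp) (by simpa [L] using hbc)
  · simpa using edge (p := 0) (p' := (0, 1)) (by simp [Prod.ext_iff])
      (by simpa [L] using (lineIntegral_comm χ c a).symm.trans hca)
  · simpa using edge (p := 0) (p' := (1, 0)) (by simp [Prod.ext_iff]) (by simpa [L] using hab)

theorem dot_grad2_perpGrad (γ : (ℝ × ℝ) →ᵃ[ℝ] ℝ) (g : ℝ × ℝ → ℝ) (x : ℝ × ℝ) :
    dot (grad2 γ x) (perpGrad g x) = fderiv ℝ g x (γ.linear (0, 1), -γ.linear (1, 0)) := by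
  have hγ : HasFDerivAt γ (LinearMap.toContinuousLinearMap γ.linear) x := by
    rw [γ.decomp]
    exact (LinearMap.toContinuousLinearMap γ.linear).hasFDerivAt.add_const _
  have hw : ((γ.linear (0, 1), -γ.linear (1, 0)) : ℝ × ℝ) =
      γ.linear (0, 1) • ((1, 0) : ℝ × ℝ) + (-γ.linear (1, 0)) • ((0, 1) : ℝ × ℝ) := by
    ext <;> simp
  rw [hw, map_add, map_smul, map_smul]
  simp only [dot, grad2, perpGrad, hγ.fderiv, LinearMap.coe_toContinuousLinearMap', smul_eq_mul]
  ring

theorem interior_moment_vanishes_general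
    (v : Fin 3 → ℝ × ℝ)
    (K : Set (ℝ × ℝ)) (hK : K = convexHull ℝ {v 0, v 1, v 2})
    (U : Set (ℝ × ℝ)) (hU : IsOpen U) (hKU : K ⊆ U)
    (χ : ℝ × ℝ → ℝ) (hχ : ContDiffOn ℝ 1 χ U)
    (hedge : ∀ i : Fin 3, lineIntegral χ (v (i + 1)) (v (i + 2)) = 0) :
    ∀ γ : (ℝ × ℝ) →ᵃ[ℝ] ℝ,
      ∫ x in K, dot (grad2 (⇑γ) x) (perpGrad χ x) = 0 := by
  intro γ
  subst hK
  simp_rw [dot_grad2_perpGrad]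
  exact setIntegral_convexHull_fderiv_eq_zero _ _ _ hU hKU hχ (hedge 0) (hedge 1) (hedge 2) _

/-- **Interior identity for the commuting BDFM1 projection.**
Let `χ` be `C¹` on an open neighbourhood of the triangle
`K = conv{v 0, v 1, v 2}` with `χ(v i) = 0` for each vertex and
`∫_{e i} χ ds = 0` on each edge. Then for every affine `γ : ℝ² → ℝ`,
`∫_K ∇γ · ∇⊥χ dx = 0`. -/
theorem interior_moment_vanishes
    (v : Fin 3 → ℝ × ℝ) (hv : AffineIndependent ℝ v)
    (K : Set (ℝ × ℝ)) (hK : K = convexHull ℝ {v 0, v 1, v 2})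
    (U : Set (ℝ × ℝ)) (hU : IsOpen U) (hKU : K ⊆ U)
    (χ : ℝ × ℝ → ℝ) (hχ : ContDiffOn ℝ 1 χ U)
    (hvert : ∀ i : Fin 3, χ (v i) = 0)
    (hedge : ∀ i : Fin 3, lineIntegral χ (v (i + 1)) (v (i + 2)) = 0) :
    ∀ γ : (ℝ × ℝ) →ᵃ[ℝ] ℝ,
      ∫ x in K, dot (grad2 (⇑γ) x) (perpGrad χ x) = 0 :=
  interior_moment_vanishes_general v K hK U hU hKU χ hχ hedge
end
end

section
/- Let U ⊆ ℝ² be open, let g : U → ℝ² be a C² diffeomorphism onto its open image with Jacobian determinant det Dg(ξ) ≠ 0 for all ξ ∈ U, and let û : U → ℝ² be C¹. Define u : g(U) → ℝ² by the Piola transformation u(g(ξ)) = (1 / det Dg(ξ)) Dg(ξ) û(ξ). Then u is differentiable and its divergence satisfies (∇·u)(g(ξ)) = (1 / det Dg(ξ)) (∇̂·û)(ξ) for every ξ ∈ U, where ∇̂· denotes the divergence with respect to the coordinates ξ. -/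
/-!
Near `g ξ` the field `u` is the Piola map `F = J⁻¹ • Dg û` (with `J = det Dg`) composed with a
local inverse of `g`, so `Du (g ξ) = DF ξ ∘ (Dg ξ)⁻¹` and `∇·u (g ξ) = tr (DF ξ ∘ (Dg ξ)⁻¹)`.
Differentiating `F` by the product rule gives `J⁻¹ • Dg Dû`, whose conjugate by `Dg` has trace
`J⁻¹ ∇̂·û`, plus two terms involving `D²g`, one from `J⁻¹` and one from `Dg`. Since
`DJ = J tr (Dg⁻¹ D²g)` (Jacobi's formula) and `D²g` is symmetric, these two terms cancel in the
trace.
-/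

noncomputable section

/-- Jacobian determinant of a map `g : ℝ² → ℝ²`. -/
def jdet (g : ℝ × ℝ → ℝ × ℝ) (x : ℝ × ℝ) : ℝ :=
  (fderiv ℝ g x (1, 0)).1 * (fderiv ℝ g x (0, 1)).2 -
    (fderiv ℝ g x (1, 0)).2 * (fderiv ℝ g x (0, 1)).1

/-- Divergence `∇·w = ∂w₁/∂x₁ + ∂w₂/∂x₂` of `w : ℝ² → ℝ²`. -/
def div2 (w : ℝ × ℝ → ℝ × ℝ) (x : ℝ × ℝ) : ℝ :=
  (fderiv ℝ w x (1, 0)).1 + (fderiv ℝ w x (0, 1)).2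

open Filter Topology ContinuousLinearMap

theorem HasStrictFDerivAt.hasFDerivAt_of_comp_eventuallyEq {𝕜 E F G : Type*}
    [NontriviallyNormedField 𝕜] [NormedAddCommGroup E] [NormedSpace 𝕜 E] [CompleteSpace E]
    [NormedAddCommGroup F] [NormedSpace 𝕜 F] [NormedAddCommGroup G] [NormedSpace 𝕜 G]
    {g : E → F} {A : E ≃L[𝕜] F} {a : E} (hg : HasStrictFDerivAt g (A : E →L[𝕜] F) a)
    {u : F → G} {f : E → G} {f' : E →L[𝕜] G} (hf : HasFDerivAt f f' a)
    (hfu : u ∘ g =ᶠ[𝓝 a] f) :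
    HasFDerivAt u (f' ∘L (A.symm : F →L[𝕜] E)) (g a) := by
  set φ := hg.localInverse g A a
  have hu : f ∘ φ =ᶠ[𝓝 (g a)] u := by
    filter_upwards [hg.eventually_right_inverse, hg.localInverse_tendsto.eventually hfu]
      with y hgφ hfφ
    rw [Function.comp_apply, ← hfφ, Function.comp_apply, hgφ]
  have hφ : φ (g a) = a := hg.localInverse_apply_image
  have hf' : HasFDerivAt f f' (φ (g a)) := by rw [hφ]; exact hf
  exact (hf'.comp (g a) hg.to_localInverse.hasFDerivAt).congr_of_eventuallyEq hu.symm

theorem ContinuousLinearMap.apply_eq_fst_smul_add_snd_smul {F : Type*} [NormedAddCommGroup F]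
    [NormedSpace ℝ F] (L : (ℝ × ℝ) →L[ℝ] F) (v : ℝ × ℝ) :
    L v = v.1 • L (1, 0) + v.2 • L (0, 1) := by
  conv_lhs => rw [show v = v.1 • ((1 : ℝ), (0 : ℝ)) + v.2 • ((0 : ℝ), (1 : ℝ)) by simp]
  rw [map_add, map_smul, map_smul]

def det2 (L : (ℝ × ℝ) →L[ℝ] ℝ × ℝ) : ℝ :=
  (L (1, 0)).1 * (L (0, 1)).2 - (L (1, 0)).2 * (L (0, 1)).1

theorem jdet_eq_det2 (g : ℝ × ℝ → ℝ × ℝ) (x : ℝ × ℝ) : jdet g x = det2 (fderiv ℝ g x) := rfl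

def adj2 (L : (ℝ × ℝ) →L[ℝ] ℝ × ℝ) (y : ℝ × ℝ) : ℝ × ℝ :=
  ((L (0, 1)).2 * y.1 - (L (0, 1)).1 * y.2, (L (1, 0)).1 * y.2 - (L (1, 0)).2 * y.1)

theorem apply_adj2 (L : (ℝ × ℝ) →L[ℝ] ℝ × ℝ) (y : ℝ × ℝ) : L (adj2 L y) = det2 L • y := by
  rw [L.apply_eq_fst_smul_add_snd_smul, adj2, det2]
  ext <;> simp only [Prod.fst_add, Prod.snd_add, Prod.smul_fst, Prod.smul_snd, smul_eq_mul] <;> ring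

theorem isInvertible_of_det2_ne_zero {L : (ℝ × ℝ) →L[ℝ] ℝ × ℝ} (hL : det2 L ≠ 0) :
    L.IsInvertible := by
  have hsurj : Function.Surjective L := fun y =>
    ⟨(det2 L)⁻¹ • adj2 L y, by rw [map_smul, apply_adj2, inv_smul_smul₀ hL]⟩
  have hinj : Function.Injective L :=
    LinearMap.injective_iff_surjective (f := (L : (ℝ × ℝ) →ₗ[ℝ] ℝ × ℝ)) |>.2 hsurj
  exact ⟨(LinearEquiv.ofBijective (L : (ℝ × ℝ) →ₗ[ℝ] ℝ × ℝ) ⟨hinj, hsurj⟩).toContinuousLinearEquiv,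
    rfl⟩

theorem ContinuousLinearEquiv.symm_apply_eq_inv_det2_smul_adj2 (A : (ℝ × ℝ) ≃L[ℝ] ℝ × ℝ)
    (hA : det2 (A : (ℝ × ℝ) →L[ℝ] ℝ × ℝ) ≠ 0) (y : ℝ × ℝ) :
    A.symm y = (det2 (A : (ℝ × ℝ) →L[ℝ] ℝ × ℝ))⁻¹ • adj2 A y := by
  rw [A.symm_apply_eq, map_smul, ← A.coe_coe, apply_adj2, inv_smul_smul₀ hA]

theorem trace_comp_symm_eq (N : (ℝ × ℝ) →L[ℝ] ℝ × ℝ) (A : (ℝ × ℝ) ≃L[ℝ] ℝ × ℝ)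
    (hA : det2 (A : (ℝ × ℝ) →L[ℝ] ℝ × ℝ) ≠ 0) :
    ((N ∘L (A.symm : (ℝ × ℝ) →L[ℝ] ℝ × ℝ)) (1, 0)).1 +
        ((N ∘L (A.symm : (ℝ × ℝ) →L[ℝ] ℝ × ℝ)) (0, 1)).2 =
      (det2 (A : (ℝ × ℝ) →L[ℝ] ℝ × ℝ))⁻¹ * ((N (adj2 A (1, 0))).1 + (N (adj2 A (0, 1))).2) := by
  simp only [comp_apply, ContinuousLinearEquiv.coe_coe, A.symm_apply_eq_inv_det2_smul_adj2 hA,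
    map_smul, Prod.smul_fst, Prod.smul_snd, smul_eq_mul, mul_add]

def piolaMap (g uh : ℝ × ℝ → ℝ × ℝ) (ξ : ℝ × ℝ) : ℝ × ℝ :=
  (jdet g ξ)⁻¹ • fderiv ℝ g ξ (uh ξ)

section Derivatives

variable {g uh : ℝ × ℝ → ℝ × ℝ} {ξ : ℝ × ℝ}

theorem hasFDerivAt_jdet {H : (ℝ × ℝ) →L[ℝ] (ℝ × ℝ) →L[ℝ] ℝ × ℝ}
    (hH : HasFDerivAt (fderiv ℝ g) H ξ) :
    HasFDerivAt (jdet g) ((fderiv ℝ g ξ (1, 0)).1 • snd ℝ ℝ ℝ ∘L H.flip (0, 1) +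
        (fderiv ℝ g ξ (0, 1)).2 • fst ℝ ℝ ℝ ∘L H.flip (1, 0) -
      ((fderiv ℝ g ξ (1, 0)).2 • fst ℝ ℝ ℝ ∘L H.flip (0, 1) +
        (fderiv ℝ g ξ (0, 1)).1 • snd ℝ ℝ ℝ ∘L H.flip (1, 0))) ξ := by
  have happly (v : ℝ × ℝ) : HasFDerivAt (fun x => fderiv ℝ g x v) (H.flip v) ξ := by
    simpa using hH.clm_apply (hasFDerivAt_const v ξ)
  exact ((happly (1, 0)).fst.mul (happly (0, 1)).snd).sub
    ((happly (1, 0)).snd.mul (happly (0, 1)).fst)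

theorem hasFDerivAt_piolaMap {H : (ℝ × ℝ) →L[ℝ] (ℝ × ℝ) →L[ℝ] ℝ × ℝ} {J' : (ℝ × ℝ) →L[ℝ] ℝ}
    {U : (ℝ × ℝ) →L[ℝ] ℝ × ℝ} (hH : HasFDerivAt (fderiv ℝ g) H ξ)
    (hJ' : HasFDerivAt (jdet g) J' ξ) (hU : HasFDerivAt uh U ξ) (hJ : jdet g ξ ≠ 0) :
    HasFDerivAt (piolaMap g uh) ((jdet g ξ)⁻¹ • (fderiv ℝ g ξ ∘L U + H.flip (uh ξ)) -
      ((jdet g ξ ^ 2)⁻¹ • J').smulRight (fderiv ℝ g ξ (uh ξ))) ξ := by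
  have hprod := ((hasFDerivAt_inv hJ).comp ξ hJ').smul (hH.clm_apply hU)
  refine hprod.congr_fderiv (ContinuousLinearMap.ext fun h => ?_)
  simp [sub_eq_add_neg, mul_comm]

/-- The `D²g`-terms cancel by Jacobi's formula and the symmetry of `D²g`. -/
theorem trace_fderiv_piolaMap_adj2_eq_div2 (hg : DifferentiableAt ℝ (fderiv ℝ g) ξ)
    (hsymm : IsSymmSndFDerivAt ℝ g ξ) (huh : DifferentiableAt ℝ uh ξ) (hJ : jdet g ξ ≠ 0) :
    (fderiv ℝ (piolaMap g uh) ξ (adj2 (fderiv ℝ g ξ) (1, 0))).1 +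
      (fderiv ℝ (piolaMap g uh) ξ (adj2 (fderiv ℝ g ξ) (0, 1))).2 = div2 uh ξ := by
  rw [(hasFDerivAt_piolaMap hg.hasFDerivAt (hasFDerivAt_jdet hg.hasFDerivAt) huh.hasFDerivAt
    hJ).fderiv, div2]
  rw [jdet] at hJ ⊢
  have hH : fderiv ℝ (fderiv ℝ g) ξ (1, 0) (0, 1) = fderiv ℝ (fderiv ℝ g) ξ (0, 1) (1, 0) :=
    hsymm _ _
  set H := fderiv ℝ (fderiv ℝ g) ξ
  set A := fderiv ℝ g ξ
  set U := fderiv ℝ uh ξ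
  simp only [sub_apply, add_apply, smul_apply, comp_apply, flip_apply, smulRight_apply, map_add,
    map_smul, H.apply_eq_fst_smul_add_snd_smul (adj2 A _),
    U.apply_eq_fst_smul_add_snd_smul (adj2 A _), A.apply_eq_fst_smul_add_snd_smul (uh ξ),
    A.apply_eq_fst_smul_add_snd_smul (U _), (H _).apply_eq_fst_smul_add_snd_smul (uh ξ)]
  simp only [adj2, mul_one, mul_zero, sub_zero, zero_sub, smul_add, neg_smul, hH, smul_neg,
    coe_snd', smul_eq_mul, neg_mul, coe_fst', Prod.fst_sub, Prod.fst_add, Prod.smul_fst,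
    Prod.fst_neg, Prod.snd_sub, Prod.snd_add, Prod.snd_neg, Prod.smul_snd]
  field_simp
  ring

end Derivatives

theorem piola_divergence_general
    (U : Set (ℝ × ℝ)) (hU : IsOpen U)
    (g : ℝ × ℝ → ℝ × ℝ) (hg : ContDiffOn ℝ 2 g U)
    (hjd : ∀ ξ ∈ U, jdet g ξ ≠ 0)
    (uh : ℝ × ℝ → ℝ × ℝ) (huh : ContDiffOn ℝ 1 uh U)
    (u : ℝ × ℝ → ℝ × ℝ)
    (hu : ∀ ξ ∈ U, u (g ξ) = (1 / jdet g ξ) • fderiv ℝ g ξ (uh ξ)) :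
    ∀ ξ ∈ U, DifferentiableAt ℝ u (g ξ) ∧
      div2 u (g ξ) = (1 / jdet g ξ) * div2 uh ξ := by
  intro ξ hξ
  have hg2 : ContDiffAt ℝ 2 g ξ := hg.contDiffAt (hU.mem_nhds hξ)
  have hDg : DifferentiableAt ℝ (fderiv ℝ g) ξ :=
    (hg2.fderiv_right (m := 1) le_rfl).differentiableAt one_ne_zero
  have huh' : DifferentiableAt ℝ uh ξ :=
    (huh.contDiffAt (hU.mem_nhds hξ)).differentiableAt one_ne_zero
  have hJ := hjd ξ hξ
  have hJ' : det2 (fderiv ℝ g ξ) ≠ 0 := jdet_eq_det2 g ξ ▸ hJ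
  obtain ⟨A, hA⟩ := isInvertible_of_det2_ne_zero hJ'
  have hF : DifferentiableAt ℝ (piolaMap g uh) ξ :=
    (hasFDerivAt_piolaMap hDg.hasFDerivAt (hasFDerivAt_jdet hDg.hasFDerivAt) huh'.hasFDerivAt
      hJ).differentiableAt
  have hloc : u ∘ g =ᶠ[𝓝 ξ] piolaMap g uh :=
    eventually_of_mem (hU.mem_nhds hξ) fun x hx => by simp [hu x hx, piolaMap]
  have hdu := (hA ▸ hg2.hasStrictFDerivAt two_ne_zero).hasFDerivAt_of_comp_eventuallyEq
    hF.hasFDerivAt hloc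
  refine ⟨hdu.differentiableAt, ?_⟩
  rw [div2, hdu.fderiv, trace_comp_symm_eq _ _ (hA ▸ hJ'), hA,
    trace_fderiv_piolaMap_adj2_eq_div2 hDg (hg2.isSymmSndFDerivAt (by simp)) huh' hJ,
    ← jdet_eq_det2, one_div]

/-- **The Piola transformation scales the divergence by the inverse Jacobian
determinant.** Let `g` be a `C²` diffeomorphism of an open set `U ⊆ ℝ²` onto
its open image, with `det Dg ≠ 0` on `U`, let `û` be `C¹` on `U`, and define
`u` on `g(U)` by the Piola transformation
`u(g ξ) = (1 / det Dg ξ) • Dg ξ (û ξ)`. Then `u` is differentiable on `g(U)`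
and `(∇·u)(g ξ) = (1 / det Dg ξ) (∇̂·û)(ξ)` for every `ξ ∈ U`. -/
theorem piola_divergence
    (U : Set (ℝ × ℝ)) (hU : IsOpen U)
    (g : ℝ × ℝ → ℝ × ℝ) (hg : ContDiffOn ℝ 2 g U)
    (hg_inj : Set.InjOn g U)
    (hjd : ∀ ξ ∈ U, jdet g ξ ≠ 0)
    (uh : ℝ × ℝ → ℝ × ℝ) (huh : ContDiffOn ℝ 1 uh U)
    (u : ℝ × ℝ → ℝ × ℝ)
    (hu : ∀ ξ ∈ U, u (g ξ) = (1 / jdet g ξ) • fderiv ℝ g ξ (uh ξ)) :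
    ∀ ξ ∈ U, DifferentiableAt ℝ u (g ξ) ∧
      div2 u (g ξ) = (1 / jdet g ξ) * div2 uh ξ :=
  piola_divergence_general U hU g hg hjd uh huh u hu
end
end
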